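/- arXiv:1004.3696 — 4 statements merged into one kernel-verified Lean document; each statement's English description precedes it below -/
import Mathlib

section
/- For 0 < θ < 2π and t > 0, the Fourier coefficients of ln f, where f(e^{iθ}) = (e^{iθ}-e^{t})^{α+β}(e^{iθ}-e^{-t})^{α-β}e^{-iθ(α-β)} e^{-iπ(α+β)} e^{V(e^{iθ})}, are given by (ln f)_0 = t(α+β) + V_0 and, for k ≥ 1, (ln f)_k = V_k - (α+β)e^{-tk}/k and (ln f)_{-k} = V_{-k} - (α-β)e^{-tk}/k, where all powers are taken with arguments in (0,2π). -/
/-!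
For `0 < θ < 2π` the branch `logB` splits the symbol as
`(α+β)(t + πi + log(1 - e^{-t}e^{iθ})) + (α-β)(iθ + log(1 - e^{-t}e^{-iθ})) + V(e^{iθ})`,
the linear terms `iθ(α-β)` and `iπ(α+β)` cancelling against the explicit factors.
Expanding `log(1 - q) = -∑ qⁿ/n` turns `ln f` into an absolutely convergent trigonometric series,
whose Fourier coefficients are read off by term-by-term integration and orthogonality of the
characters `e^{ikθ}`.
-/

open MeasureTheory intervalIntegral

/-- The branch of the complex logarithm with argument in `(0, 2π)` (cut along `[0,∞)`). -/
noncomputable def logB (z : ℂ) : ℂ :=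
  Complex.log z + (if Complex.arg z < 0 then 2 * Real.pi * Complex.I else 0)

open Complex Set
open scoped Real

lemma exp_logB {z : ℂ} (hz : z ≠ 0) : exp (logB z) = z := by
  unfold logB
  split_ifs <;> simp [exp_add, exp_log hz]

lemma logB_im_mem_Ico (z : ℂ) : (logB z).im ∈ Ico 0 (2 * π) := by
  unfold logB
  have := neg_pi_lt_arg z
  have := arg_le_pi z
  split_ifs with h
  · have h2π : (2 * π * I : ℂ).im = 2 * π := by simp
    rw [add_im, log_im, h2π]
    constructor <;> linarith
  · rw [add_zero, log_im]
    constructor <;> linarith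

-- Under `w ↦ πi - w` the strip `0 < Im w < 2π` becomes part of the principal strip,
-- where `exp` is injective.
lemma logB_eq_of_exp_eq {z w : ℂ} (h : exp w = z) (h₀ : 0 < w.im) (h₂ : w.im < 2 * π) :
    logB z = w := by
  have hz : z ≠ 0 := h ▸ exp_ne_zero w
  obtain ⟨hl₀, hl₂⟩ := logB_im_mem_Ico z
  have key : exp (π * I - logB z) = exp (π * I - w) := by
    rw [exp_sub, exp_sub, exp_logB hz, h]
  have him (u : ℂ) : (π * I - u).im = π - u.im := by simp
  have := exp_inj_of_neg_pi_lt_of_le_pi (by rw [him]; linarith) (by rw [him]; linarith)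
    (by rw [him]; linarith) (by rw [him]; linarith) key
  linear_combination -this

lemma re_one_sub_pos {z : ℂ} (hz : ‖z‖ < 1) : 0 < (1 - z).re := by
  have := re_le_norm z
  simp only [sub_re, one_re]
  linarith

lemma one_sub_ne_zero_of_norm_lt_one {z : ℂ} (hz : ‖z‖ < 1) : 1 - z ≠ 0 :=
  sub_ne_zero.mpr fun h => by rw [← h, norm_one] at hz; exact lt_irrefl _ hz

lemma abs_arg_one_sub_lt {z : ℂ} (hz : ‖z‖ < 1) : |arg (1 - z)| < π / 2 :=
  abs_arg_lt_pi_div_two_iff.mpr (Or.inl (re_one_sub_pos hz))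

lemma norm_ofReal_mul_exp_mul_I {r : ℝ} (hr₀ : 0 ≤ r) (x : ℝ) : ‖(r : ℂ) * exp (x * I)‖ = r := by
  rw [norm_mul, norm_exp_ofReal_mul_I, mul_one, norm_real, Real.norm_of_nonneg hr₀]

lemma logB_exp_mul_I_sub_inv {r : ℝ} (hr₀ : 0 < r) (hr₁ : r < 1) (θ : ℝ) :
    logB (exp (θ * I) - (r⁻¹ : ℝ)) = -Real.log r + π * I + log (1 - r * exp (θ * I)) := by
  have hz : ‖(r : ℂ) * exp (θ * I)‖ < 1 := by rwa [norm_ofReal_mul_exp_mul_I hr₀.le]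
  have hne : 1 - (r : ℂ) * exp (θ * I) ≠ 0 := one_sub_ne_zero_of_norm_lt_one hz
  have harg := abs_lt.mp (abs_arg_one_sub_lt hz)
  have him : (-Real.log r + π * I + log (1 - r * exp (θ * I))).im
      = π + arg (1 - r * exp (θ * I)) := by simp [log_im]
  apply logB_eq_of_exp_eq
  · rw [exp_add, exp_add, exp_log hne, exp_pi_mul_I, ← ofReal_neg, ← Real.log_inv,
      ofReal_log (inv_nonneg.mpr hr₀.le), exp_log (by exact_mod_cast (inv_pos.mpr hr₀).ne')]
    have : (r : ℂ) ≠ 0 := by exact_mod_cast hr₀.ne'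
    push_cast
    field_simp
    ring
  · rw [him]; linarith
  · rw [him]; linarith

lemma logB_exp_mul_I_sub {r : ℝ} (hr₀ : 0 < r) (hr₁ : r < 1) {θ : ℝ} (hθ : θ ∈ Ioo 0 (2 * π)) :
    logB (exp (θ * I) - r) = θ * I + log (1 - r * exp ((-θ : ℝ) * I)) := by
  have hz : ‖(r : ℂ) * exp ((-θ : ℝ) * I)‖ < 1 := by rwa [norm_ofReal_mul_exp_mul_I hr₀.le]
  have hne : 1 - (r : ℂ) * exp ((-θ : ℝ) * I) ≠ 0 := one_sub_ne_zero_of_norm_lt_one hz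
  have harg := abs_lt.mp (abs_arg_one_sub_lt hz)
  have him : (1 - (r : ℂ) * exp ((-θ : ℝ) * I)).im = r * Real.sin θ := by
    rw [sub_im, one_im, im_ofReal_mul, exp_ofReal_mul_I_im, Real.sin_neg]
    ring
  obtain ⟨hθ₀, hθ₂⟩ := hθ
  apply logB_eq_of_exp_eq
  · rw [exp_add, exp_log hne, mul_sub, mul_one, mul_left_comm, ← exp_add]
    push_cast
    simp
  -- `arg (1 - r e^{-iθ})` has the sign of `sin θ` and lies in `(-π/2, π/2)`.
  all_goals
    simp only [add_im, mul_I_im, ofReal_re, log_im]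
    rcases le_or_gt θ π with hθπ | hθπ
    · have : 0 ≤ arg (1 - r * exp ((-θ : ℝ) * I)) := by
        rw [arg_nonneg_iff, him]
        exact mul_nonneg hr₀.le (Real.sin_nonneg_of_nonneg_of_le_pi hθ₀.le hθπ)
      linarith
    · have : arg (1 - r * exp ((-θ : ℝ) * I)) < 0 := by
        rw [arg_neg_iff, him]
        have := Real.sin_pos_of_pos_of_lt_pi (x := θ - π) (by linarith) (by linarith)
        rw [Real.sin_sub_pi] at this
        nlinarith
      linarith

noncomputable def trigSeries {ι : Type*} (a : ι → ℂ) (m : ι → ℤ) (θ : ℝ) : ℂ :=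
  ∑' i, a i * exp (m i * θ * I)

noncomputable def trigCoeff (f : ℝ → ℂ) (k : ℤ) : ℂ :=
  (1 / (2 * π)) * ∫ θ in (0 : ℝ)..(2 * π), f θ * exp (-k * θ * I)

lemma norm_exp_intCast_mul_mul_I (m : ℤ) (θ : ℝ) : ‖exp (m * θ * I)‖ = 1 := by
  simp [norm_exp]

lemma integral_exp_intCast_mul_mul_I (m : ℤ) :
    ∫ θ in (0 : ℝ)..(2 * π), exp (m * θ * I) = if m = 0 then (2 * π : ℂ) else 0 := by
  rcases eq_or_ne m 0 with rfl | hm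
  · simp
  · have hmI : (m : ℂ) * I ≠ 0 := mul_ne_zero (Int.cast_ne_zero.mpr hm) I_ne_zero
    simp_rw [mul_right_comm _ _ I]
    have h2π : exp (m * I * (2 * π)) = 1 := by
      rw [← exp_int_mul_two_pi_mul_I m]; ring_nf
    simp [integral_exp_mul_complex hmI, hm, h2π]

lemma integral_exp_mul_exp_neg (m k : ℤ) :
    ∫ θ in (0 : ℝ)..(2 * π), exp (m * θ * I) * exp (-k * θ * I)
      = if m = k then (2 * π : ℂ) else 0 := by
  have h : ∀ θ : ℝ, exp (m * θ * I) * exp (-k * θ * I) = exp ((m - k : ℤ) * θ * I) := by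
    intro θ
    rw [← exp_add]
    push_cast
    ring_nf
  simp_rw [h, integral_exp_intCast_mul_mul_I, sub_eq_zero]

section trigSeries

variable {ι : Type*} {a : ι → ℂ} {m : ι → ℤ}

lemma norm_trigSeries_term (a : ι → ℂ) (m : ι → ℤ) (i : ι) (θ : ℝ) :
    ‖a i * exp (m i * θ * I)‖ = ‖a i‖ := by
  rw [norm_mul, norm_exp_intCast_mul_mul_I, mul_one]

lemma continuous_trigSeries (ha : Summable fun i => ‖a i‖) : Continuous (trigSeries a m) :=
  continuous_tsum (fun i => by fun_prop) ha fun i θ => (norm_trigSeries_term a m i θ).le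

lemma trigSeries_neg (a : ι → ℂ) (m : ι → ℤ) (θ : ℝ) :
    trigSeries a m (-θ) = trigSeries a (-m) θ := by
  simp only [trigSeries, Pi.neg_apply, Int.cast_neg, ofReal_neg, mul_neg, neg_mul]

lemma trigCoeff_trigSeries [Countable ι] (ha : Summable fun i => ‖a i‖) (k : ℤ) :
    trigCoeff (trigSeries a m) k = ∑' i, if m i = k then a i else 0 := by
  have hsum : HasSum (fun i => ∫ θ in (0 : ℝ)..(2 * π), a i * exp (m i * θ * I) * exp (-k * θ * I))
      (∫ θ in (0 : ℝ)..(2 * π), trigSeries a m θ * exp (-k * θ * I)) := by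
    refine intervalIntegral.hasSum_integral_of_dominated_convergence (fun i _ => ‖a i‖)
      (fun i => by fun_prop) (fun i => ae_of_all _ fun θ _ => ?_) (ae_of_all _ fun _ _ => ha)
      intervalIntegrable_const (ae_of_all _ fun θ _ => ?_)
    · rw [norm_mul, norm_trigSeries_term, ← Int.cast_neg, norm_exp_intCast_mul_mul_I, mul_one]
    · exact (ha.of_norm_bounded fun i => (norm_trigSeries_term a m i θ).le).hasSum.mul_right _
  have hterm : ∀ i, ∫ θ in (0 : ℝ)..(2 * π), a i * exp (m i * θ * I) * exp (-k * θ * I)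
      = a i * if m i = k then (2 * π : ℂ) else 0 := fun i => by
    simp only [← integral_exp_mul_exp_neg, ← intervalIntegral.integral_const_mul, mul_assoc]
  rw [trigCoeff, ← hsum.tsum_eq, tsum_congr hterm, ← tsum_mul_left]
  congr 1 with i
  split_ifs
  · field_simp
  · simp

lemma trigCoeff_trigSeries_apply [Countable ι] (hm : m.Injective) (ha : Summable fun i => ‖a i‖)
    (i : ι) : trigCoeff (trigSeries a m) (m i) = a i := by
  classical
  simp only [trigCoeff_trigSeries ha, hm.eq_iff, tsum_ite_eq]

lemma trigCoeff_trigSeries_of_notMem_range [Countable ι] (ha : Summable fun i => ‖a i‖) {k : ℤ}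
    (hk : k ∉ range m) : trigCoeff (trigSeries a m) k = 0 := by
  have hmk : ∀ i, m i ≠ k := fun i h => hk ⟨i, h⟩
  simp [trigCoeff_trigSeries ha, hmk]

end trigSeries

section trigCoeff

variable {f g : ℝ → ℂ}

lemma trigCoeff_congr (h : EqOn f g (Ioo 0 (2 * π))) (k : ℤ) : trigCoeff f k = trigCoeff g k := by
  rw [trigCoeff, trigCoeff, intervalIntegral.integral_congr_Ioo_of_le (by positivity)
    fun θ hθ => by rw [h hθ]]

lemma trigCoeff_add (hf : IntervalIntegrable f volume 0 (2 * π))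
    (hg : IntervalIntegrable g volume 0 (2 * π)) (k : ℤ) :
    trigCoeff (fun θ => f θ + g θ) k = trigCoeff f k + trigCoeff g k := by
  have hexp : Continuous fun θ : ℝ => exp (-k * θ * I) := by fun_prop
  simp only [trigCoeff, add_mul]
  rw [intervalIntegral.integral_add (hf.mul_continuousOn hexp.continuousOn)
    (hg.mul_continuousOn hexp.continuousOn), mul_add]

lemma trigCoeff_const_mul (C : ℂ) (f : ℝ → ℂ) (k : ℤ) :
    trigCoeff (fun θ => C * f θ) k = C * trigCoeff f k := by
  simp only [trigCoeff, mul_assoc, intervalIntegral.integral_const_mul]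
  ring

lemma trigCoeff_const (C : ℂ) (k : ℤ) : trigCoeff (fun _ => C) k = if k = 0 then C else 0 := by
  have h := integral_exp_mul_exp_neg 0 k
  simp only [Int.cast_zero, zero_mul, exp_zero, one_mul, eq_comm (a := (0 : ℤ))] at h
  rw [trigCoeff, intervalIntegral.integral_const_mul, h]
  split_ifs
  · field_simp
  · simp

end trigCoeff

lemma trigCoeff_const_add_trigSeries {a : ℕ → ℂ} (ha : Summable fun n => ‖a n‖) {V : ℤ → ℂ}
    (hV : Summable fun k => ‖V k‖) (A B C : ℂ) (k : ℤ) :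
    trigCoeff (fun θ => C + A * trigSeries a (↑) θ + B * trigSeries a (-(↑)) θ
        + trigSeries V id θ) k
      = (if k = 0 then C else 0) + A * trigCoeff (trigSeries a (↑)) k
        + B * trigCoeff (trigSeries a (-(↑))) k + V k := by
  have := continuous_trigSeries (m := ((↑) : ℕ → ℤ)) ha
  have := continuous_trigSeries (m := -((↑) : ℕ → ℤ)) ha
  have := continuous_trigSeries (m := id) hV
  have hVk : trigCoeff (trigSeries V id) k = V k :=
    trigCoeff_trigSeries_apply Function.injective_id hV k
  rw [trigCoeff_add, trigCoeff_add, trigCoeff_add, trigCoeff_const, trigCoeff_const_mul,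
    trigCoeff_const_mul, hVk]
  all_goals exact Continuous.intervalIntegrable (by fun_prop) _ _

-- The `n = 0` coefficient is `-(1 / 0) = 0`, matching the absent constant term of
-- `w ↦ log (1 - z * w)`.
noncomputable def logOneSubCoeff (z : ℂ) (n : ℕ) : ℂ := -(z ^ n / n)

lemma logOneSubCoeff_zero (z : ℂ) : logOneSubCoeff z 0 = 0 := by
  simp [logOneSubCoeff]

lemma logOneSubCoeff_ofReal_exp (s : ℝ) (n : ℕ) :
    logOneSubCoeff (Real.exp s) n = -(Real.exp (s * n) / n) := by
  rw [logOneSubCoeff, ← ofReal_pow, ← Real.exp_nat_mul, mul_comm]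

lemma summable_norm_logOneSubCoeff {z : ℂ} (hz : ‖z‖ < 1) :
    Summable fun n => ‖logOneSubCoeff z n‖ := by
  refine (summable_geometric_of_lt_one (norm_nonneg z) hz).of_nonneg_of_le (fun _ => norm_nonneg _)
    fun n => ?_
  rw [logOneSubCoeff, norm_neg, norm_div, norm_pow, norm_natCast]
  rcases eq_or_ne n 0 with rfl | hn
  · simp
  · exact div_le_self (by positivity) (Nat.one_le_cast.mpr (Nat.one_le_iff_ne_zero.mpr hn))

lemma log_one_sub_mul_exp_eq_trigSeries {z : ℂ} (hz : ‖z‖ < 1) (x : ℝ) :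
    log (1 - z * exp (x * I)) = trigSeries (logOneSubCoeff z) (↑) x := by
  have hw : ‖z * exp (x * I)‖ < 1 := by rwa [norm_mul, norm_exp_ofReal_mul_I, mul_one]
  rw [← neg_neg (log _), ← (hasSum_taylorSeries_neg_log hw).tsum_eq, ← tsum_neg, trigSeries]
  congr 1 with n
  rw [logOneSubCoeff, mul_pow, ← exp_nat_mul]
  push_cast
  ring_nf

lemma norm_ofReal_exp_neg_lt_one {t : ℝ} (ht : 0 < t) : ‖(Real.exp (-t) : ℂ)‖ < 1 := by
  rw [norm_real, Real.norm_of_nonneg (Real.exp_pos _).le]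
  exact Real.exp_lt_one_iff.mpr (neg_neg_of_pos ht)

lemma log_symbol_eq_trigSeries (α β : ℂ) {t θ : ℝ} (ht : 0 < t) (hθ : θ ∈ Ioo 0 (2 * π)) :
    (α + β) * logB (exp (θ * I) - (Real.exp t : ℂ))
        + (α - β) * logB (exp (θ * I) - (Real.exp (-t) : ℂ)) - I * θ * (α - β) - I * π * (α + β)
      = t * (α + β) + (α + β) * trigSeries (logOneSubCoeff (Real.exp (-t))) (↑) θ
        + (α - β) * trigSeries (logOneSubCoeff (Real.exp (-t))) (-(↑)) θ := by
  have hr₀ : 0 < Real.exp (-t) := Real.exp_pos _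
  have hr₁ : Real.exp (-t) < 1 := Real.exp_lt_one_iff.mpr (neg_neg_of_pos ht)
  have hrz := norm_ofReal_exp_neg_lt_one ht
  rw [show Real.exp t = (Real.exp (-t))⁻¹ by rw [Real.exp_neg, inv_inv],
    logB_exp_mul_I_sub_inv hr₀ hr₁, logB_exp_mul_I_sub hr₀ hr₁ hθ,
    log_one_sub_mul_exp_eq_trigSeries hrz, log_one_sub_mul_exp_eq_trigSeries hrz,
    trigSeries_neg, Real.log_exp]
  push_cast
  ring

lemma natCast_notMem_range_neg_natCast {k : ℕ} (hk : 1 ≤ k) :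
    (k : ℤ) ∉ range (-((↑) : ℕ → ℤ)) := by
  rintro ⟨n, hn⟩
  simp only [Pi.neg_apply] at hn
  omega

lemma neg_natCast_notMem_range_natCast {k : ℕ} (hk : 1 ≤ k) :
    -(k : ℤ) ∉ range ((↑) : ℕ → ℤ) := by
  rintro ⟨n, hn⟩
  omega

lemma summable_norm_of_summable_norm_mul_pow {V : ℤ → ℂ} {ρ : ℝ} (hρ : 1 ≤ ρ)
    (h : Summable fun k => ‖V k‖ * ρ ^ k.natAbs) : Summable fun k => ‖V k‖ :=
  h.of_nonneg_of_le (fun _ => norm_nonneg _)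
    fun _ => le_mul_of_one_le_right (norm_nonneg _) (one_le_pow₀ hρ)

theorem fourier_coeffs_log_symbol_general (α β : ℂ) (t : ℝ) (ht : 0 < t)
    (V : ℤ → ℂ) (hV : ∃ ρ : ℝ, 1 < ρ ∧ Summable (fun k : ℤ => ‖V k‖ * ρ ^ k.natAbs))
    (lnf : ℝ → ℂ)
    (hlnf : ∀ θ : ℝ, lnf θ =
      (α + β) * logB (Complex.exp (θ * Complex.I) - (Real.exp t : ℂ))
        + (α - β) * logB (Complex.exp (θ * Complex.I) - (Real.exp (-t) : ℂ))
        - Complex.I * θ * (α - β) - Complex.I * Real.pi * (α + β)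
        + ∑' k : ℤ, V k * Complex.exp (k * θ * Complex.I))
    (c : ℤ → ℂ)
    (hc : ∀ k : ℤ, c k = (1 / (2 * Real.pi)) *
      ∫ θ in (0:ℝ)..(2 * Real.pi), lnf θ * Complex.exp (-k * θ * Complex.I)) :
    c 0 = t * (α + β) + V 0 ∧
    ∀ k : ℕ, 1 ≤ k →
      c k = V k - (α + β) * Real.exp (-t * k) / k ∧
      c (-(k : ℤ)) = V (-(k : ℤ)) - (α - β) * Real.exp (-t * k) / k := by
  obtain ⟨ρ, hρ, hVρ⟩ := hV
  have hVs := summable_norm_of_summable_norm_mul_pow hρ.le hVρ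
  set a := logOneSubCoeff (Real.exp (-t))
  have ha : Summable fun n => ‖a n‖ :=
    summable_norm_logOneSubCoeff (norm_ofReal_exp_neg_lt_one ht)
  have hsymbol : EqOn lnf (fun θ => t * (α + β) + (α + β) * trigSeries a (↑) θ
      + (α - β) * trigSeries a (-(↑)) θ + trigSeries V id θ) (Ioo 0 (2 * π)) :=
    fun θ hθ => by rw [hlnf, log_symbol_eq_trigSeries α β ht hθ]; rfl
  have hcoeff (k : ℤ) := (hc k).trans ((trigCoeff_congr hsymbol k).trans
    (trigCoeff_const_add_trigSeries ha hVs _ _ _ k))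
  have hplus : ∀ k : ℕ, trigCoeff (trigSeries a (↑)) k = a k :=
    trigCoeff_trigSeries_apply Nat.cast_injective ha
  have hminus : ∀ k : ℕ, trigCoeff (trigSeries a (-(↑))) (-(k : ℤ)) = a k :=
    trigCoeff_trigSeries_apply (fun _ _ h => by simpa using h) ha
  have ha_apply : ∀ k : ℕ, a k = -(Real.exp (-t * k) / k) := logOneSubCoeff_ofReal_exp _
  refine ⟨?_, fun k hk => ⟨?_, ?_⟩⟩
  · have hp := hplus 0
    have hm := hminus 0
    have ha₀ : a 0 = 0 := logOneSubCoeff_zero _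
    rw [Nat.cast_zero, ha₀] at hp
    rw [Nat.cast_zero, neg_zero, ha₀] at hm
    rw [hcoeff, if_pos rfl, hp, hm]
    ring
  · rw [hcoeff, if_neg (by omega), hplus k, trigCoeff_trigSeries_of_notMem_range ha
      (natCast_notMem_range_neg_natCast hk), ha_apply]
    ring
  · rw [hcoeff, if_neg (by omega), hminus k, trigCoeff_trigSeries_of_notMem_range ha
      (neg_natCast_notMem_range_natCast hk), ha_apply]
    ring

/-- Fourier coefficients of `ln f` for the symbol
`f(e^{iθ}) = (e^{iθ}-e^{t})^{α+β}(e^{iθ}-e^{-t})^{α-β}e^{-iθ(α-β)}e^{-iπ(α+β)}e^{V(e^{iθ})}`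
with all powers taken with arguments in `(0,2π)`:
`(ln f)_0 = t(α+β)+V_0`, `(ln f)_k = V_k - (α+β)e^{-tk}/k` and
`(ln f)_{-k} = V_{-k} - (α-β)e^{-tk}/k` for `k ≥ 1`. -/
theorem fourier_coeffs_log_symbol (α β : ℂ) (hα : -1/2 < α.re) (t : ℝ) (ht : 0 < t)
    (V : ℤ → ℂ) (hV : ∃ ρ : ℝ, 1 < ρ ∧ Summable (fun k : ℤ => ‖V k‖ * ρ ^ k.natAbs))
    (lnf : ℝ → ℂ)
    (hlnf : ∀ θ : ℝ, lnf θ =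
      (α + β) * logB (Complex.exp (θ * Complex.I) - (Real.exp t : ℂ))
        + (α - β) * logB (Complex.exp (θ * Complex.I) - (Real.exp (-t) : ℂ))
        - Complex.I * θ * (α - β) - Complex.I * Real.pi * (α + β)
        + ∑' k : ℤ, V k * Complex.exp (k * θ * Complex.I))
    (c : ℤ → ℂ)
    (hc : ∀ k : ℤ, c k = (1 / (2 * Real.pi)) *
      ∫ θ in (0:ℝ)..(2 * Real.pi), lnf θ * Complex.exp (-k * θ * Complex.I)) :
    c 0 = t * (α + β) + V 0 ∧
    ∀ k : ℕ, 1 ≤ k →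
      c k = V k - (α + β) * Real.exp (-t * k) / k ∧
      c (-(k : ℤ)) = V (-(k : ℤ)) - (α - β) * Real.exp (-t * k) / k :=
  fourier_coeffs_log_symbol_general α β t ht V hV lnf hlnf c hc
end

section
/- Let σ, u, v be functions on an interval with x ≠ 0, u ≠ 0, satisfying σ' = -v, -x σ'' = u v (v - α + β) - (v/u)(v - β - α), and σ - x σ' = u v (v - α + β) + (v/u)(v - β - α) - 2v² + 2αv. Then σ satisfies the σ-form of Painlevé V: (x σ'')² = (σ - x σ' + 2(σ')² + 2α σ')² - 4(σ')² (σ' + α + β)(σ' + α - β). -/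
/-- If `σ, u, v` satisfy `σ' = -v`,
`-x σ'' = u v (v - α + β) - (v/u)(v - β - α)`, and
`σ - x σ' = u v (v - α + β) + (v/u)(v - β - α) - 2v² + 2αv`
on an interval avoiding zeros of `x` and `u`, then `σ` satisfies the Jimbo–Miwa–Okamoto
σ-form of the fifth Painlevé equation:
`(x σ'')² = (σ - x σ' + 2(σ')² + 2α σ')² - 4(σ')² (σ' + α + β)(σ' + α - β)`. -/
theorem sigma_form_painleveV (α β : ℂ) (a b : ℝ)
    (σ σ' σ'' u v : ℝ → ℂ)
    (hne : ∀ x ∈ Set.Ioo a b, (x : ℝ) ≠ 0 ∧ u x ≠ 0)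
    (hσ : ∀ x ∈ Set.Ioo a b, HasDerivAt σ (σ' x) x)
    (hσ' : ∀ x ∈ Set.Ioo a b, HasDerivAt σ' (σ'' x) x)
    (h1 : ∀ x ∈ Set.Ioo a b, σ' x = -v x)
    (h2 : ∀ x ∈ Set.Ioo a b,
      -(x : ℂ) * σ'' x = u x * v x * (v x - α + β) - (v x / u x) * (v x - β - α))
    (h3 : ∀ x ∈ Set.Ioo a b,
      σ x - (x : ℂ) * σ' x =
        u x * v x * (v x - α + β) + (v x / u x) * (v x - β - α)
          - 2 * (v x) ^ 2 + 2 * α * v x) :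
    ∀ x ∈ Set.Ioo a b,
      ((x : ℂ) * σ'' x) ^ 2 =
        (σ x - (x : ℂ) * σ' x + 2 * (σ' x) ^ 2 + 2 * α * σ' x) ^ 2
          - 4 * (σ' x) ^ 2 * (σ' x + α + β) * (σ' x + α - β) := by
  intro x hx
  obtain ⟨-, hu⟩ := hne x hx
  have key : (x : ℂ) * σ'' x
      = (v x / u x) * (v x - β - α) - u x * v x * (v x - α + β) := by
    linear_combination -(h2 x hx)
  rw [h3 x hx, h1 x hx, key]
  field_simp
  ring
end

section
/- The Kummer transformation φ(a,c;z) = e^z φ(c-a, c; -z) holds for all z ∈ ℂ and all a, c ∈ ℂ with c not a nonpositive integer. -/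
/-!
Multiply the two power series on the right. By the Cauchy product, the coefficient of `z ^ n` in
`e^z φ(c-a, c; -z)` is `(n! (c)_n)⁻¹ ∑_m C(n,m) (-1)^m (c-a)_m (c+m)_(n-m)`, using
`(c)_n = (c)_m (c+m)_(n-m)`. Since `(-1)^m (b)_m` and `(c+m)_(n-m)` are falling factorials of
`-b` and `c+n-1`, the Chu–Vandermonde identity collapses the sum to `(c-(c-a))_n = (a)_n`.
Both series converge absolutely by the ratio test.
-/

/-- Rising factorial (Pochhammer symbol) `(a)_n = a(a+1)⋯(a+n-1)`. -/
noncomputable def poch (a : ℂ) (n : ℕ) : ℂ := ∏ i ∈ Finset.range n, (a + i)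

/-- The regular confluent hypergeometric (Kummer) function
`φ(a,c;z) = ∑_{n≥0} (a)_n/(c)_n · z^n/n!`. -/
noncomputable def kummerPhi (a c z : ℂ) : ℂ :=
  ∑' n : ℕ, (poch a n / poch c n) * z ^ n / (Nat.factorial n)

open Finset Polynomial Filter Topology
open scoped Nat

theorem descPochhammer_smeval_eq_eval {R : Type*} [Ring R] (r : R) (n : ℕ) :
    (descPochhammer ℤ n).smeval r = (descPochhammer R n).eval r := by
  rw [← aeval_eq_smeval, ← eval_map_algebraMap, descPochhammer_map]

/-- Chu–Vandermonde for falling factorials at `c + n - 1` and `-b`, read through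
`(x)_k = (x + k - 1)^{\underline k}` and `(-1)^k (b)_k = (-b)^{\underline k}`. -/
theorem ascPochhammer_eval_sub {R : Type*} [CommRing R] (b c : R) (n : ℕ) :
    (ascPochhammer R n).eval (c - b) = ∑ ij ∈ antidiagonal n,
      n.choose ij.2 * ((-1) ^ ij.2 * (ascPochhammer R ij.2).eval b) *
        (ascPochhammer R ij.1).eval (c + ij.2) := by
  have h := Ring.descPochhammer_smeval_add n (Commute.all (c + n - 1) (-b))
  simp only [descPochhammer_smeval_eq_eval] at h
  rw [descPochhammer_eval_eq_ascPochhammer] at h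
  rw [show c - b = c + n - 1 + -b - n + 1 by ring, h]
  refine sum_congr rfl fun ⟨i, j⟩ hij => ?_
  obtain rfl : i + j = n := HasAntidiagonal.mem_antidiagonal.mp hij
  have hneg := ascPochhammer_eval_neg_eq_descPochhammer (R := R) (-b) j
  rw [neg_neg] at hneg
  rw [hneg, descPochhammer_eval_eq_ascPochhammer, Nat.choose_symm_add,
    ← mul_assoc ((-1 : R) ^ j), ← mul_pow]
  push_cast
  ring_nf

theorem tendsto_add_div_add_atTop_nhds_one {𝕜 : Type*} [Field 𝕜] [TopologicalSpace 𝕜]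
    [IsTopologicalDivisionRing 𝕜] [CharZero 𝕜] [ContinuousSMul ℚ≥0 𝕜] (b c : 𝕜) :
    Tendsto (fun n : ℕ => (b + n) / (c + n)) atTop (𝓝 1) := by
  have h : Tendsto (fun n : ℕ => (b / n + 1) / (c / n + 1)) atTop (𝓝 1) := by
    simpa [Pi.div_def] using ((tendsto_const_div_atTop_nhds_zero_nat b).add_const 1).div
      ((tendsto_const_div_atTop_nhds_zero_nat c).add_const 1) (by simp)
  refine h.congr' ((eventually_ne_atTop 0).mono fun n hn => ?_)
  have : (n : 𝕜) ≠ 0 := Nat.cast_ne_zero.2 hn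
  field_simp

theorem summable_norm_of_succ_eq_mul {α : Type*} [SeminormedRing α] {f r : ℕ → α}
    (hf : ∀ n, f (n + 1) = r n * f n) (hr : Tendsto r atTop (𝓝 0)) :
    Summable fun n => ‖f n‖ := by
  refine summable_of_ratio_norm_eventually_le (r := 1 / 2) (by norm_num) ?_
  filter_upwards [hr.norm.eventually_le_const (by norm_num : ‖(0 : α)‖ < 1 / 2)] with n hn
  rw [norm_norm, norm_norm, hf]
  exact (norm_mul_le _ _).trans (mul_le_mul_of_nonneg_right hn (norm_nonneg _))

theorem poch_eq_eval_ascPochhammer (a : ℂ) (n : ℕ) : poch a n = (ascPochhammer ℂ n).eval a := by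
  induction n with
  | zero => simp [poch]
  | succ n ih => rw [poch, prod_range_succ, ← poch, ih, ascPochhammer_succ_eval]

theorem poch_succ (a : ℂ) (n : ℕ) : poch a (n + 1) = poch a n * (a + n) :=
  prod_range_succ _ _

theorem poch_add (a : ℂ) (m k : ℕ) : poch a (m + k) = poch a m * poch (a + m) k := by
  simp only [poch, prod_range_add, Nat.cast_add, add_assoc]

theorem poch_ne_zero {c : ℂ} (hc : ∀ n : ℕ, c ≠ -n) (n : ℕ) : poch c n ≠ 0 :=
  prod_ne_zero_iff.2 fun i _ h => hc i (eq_neg_of_add_eq_zero_left h)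

noncomputable def kummerTerm (a c z : ℂ) (n : ℕ) : ℂ := poch a n / poch c n * z ^ n / n !

theorem kummerTerm_succ (a c z : ℂ) (n : ℕ) :
    kummerTerm a c z (n + 1) = (a + n) / (c + n) * (z / (n + 1)) * kummerTerm a c z n := by
  simp only [kummerTerm, poch_succ, pow_succ, Nat.factorial_succ, Nat.cast_mul, div_eq_mul_inv,
    mul_inv]
  push_cast
  ring

theorem summable_norm_kummerTerm (a c z : ℂ) : Summable fun n => ‖kummerTerm a c z n‖ := by
  refine summable_norm_of_succ_eq_mul (kummerTerm_succ a c z) ?_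
  simpa using (tendsto_add_div_add_atTop_nhds_one a c).mul
    ((tendsto_const_div_atTop_nhds_zero_nat z).comp (tendsto_add_atTop_nat 1))

theorem sum_antidiagonal_pow_div_factorial_mul_kummerTerm {a c : ℂ} (hc : ∀ n : ℕ, c ≠ -n)
    (z : ℂ) (n : ℕ) :
    ∑ ij ∈ antidiagonal n, z ^ ij.1 / ij.1 ! * kummerTerm (c - a) c (-z) ij.2 =
      kummerTerm a c z n := by
  have hterm : ∀ ij ∈ antidiagonal n, z ^ ij.1 / ij.1 ! * kummerTerm (c - a) c (-z) ij.2 =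
      n.choose ij.2 * ((-1) ^ ij.2 * poch (c - a) ij.2) * poch (c + ij.2) ij.1 *
        (z ^ n / (poch c n * n !)) := by
    rintro ⟨k, m⟩ hkm
    obtain rfl : k + m = n := HasAntidiagonal.mem_antidiagonal.mp hkm
    have hfac : ((k + m).choose m * k ! * m ! : ℂ) = (k + m)! := by
      exact_mod_cast Nat.add_choose_mul_factorial_mul_factorial k m
    have hchoose : ((k + m).choose m : ℂ) ≠ 0 :=
      Nat.cast_ne_zero.2 (Nat.choose_pos (by omega)).ne'
    obtain ⟨hcm, hcmk⟩ := mul_ne_zero_iff.mp (poch_add c m k ▸ poch_ne_zero hc (m + k))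
    rw [add_comm k m, poch_add c m k, add_comm m k, ← hfac, kummerTerm, neg_pow, pow_add]
    field_simp
  have hvandermonde : ∑ ij ∈ antidiagonal n,
      n.choose ij.2 * ((-1) ^ ij.2 * poch (c - a) ij.2) * poch (c + ij.2) ij.1 = poch a n := by
    simp only [poch_eq_eval_ascPochhammer]
    rw [← ascPochhammer_eval_sub, sub_sub_cancel]
  rw [sum_congr rfl hterm, ← sum_mul, hvandermonde, kummerTerm]
  ring

/-- The Kummer transformation `φ(a,c;z) = e^z φ(c-a, c; -z)` for all `z ∈ ℂ` and all
`a, c ∈ ℂ` with `c` not a nonpositive integer. -/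
theorem kummer_transformation (a c z : ℂ) (hc : ∀ n : ℕ, c ≠ -(n : ℂ)) :
    kummerPhi a c z = Complex.exp z * kummerPhi (c - a) c (-z) := by
  rw [Complex.exp_eq_exp_ℂ, NormedSpace.exp_eq_tsum_div]
  change ∑' n, kummerTerm a c z n = _ * ∑' n, kummerTerm (c - a) c (-z) n
  rw [tsum_mul_tsum_eq_tsum_sum_antidiagonal_of_summable_norm
    (NormedSpace.norm_expSeries_div_summable z) (summable_norm_kummerTerm _ _ _)]
  exact tsum_congr fun n => (sum_antidiagonal_pow_div_factorial_mul_kummerTerm hc z n).symm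
end

section
/- Suppose h is analytic and bounded on the closed right half-plane {Re ζ ≥ 0}, and satisfies h(ζ) = O(e^{-x|ζ|}) as ζ → ±i∞ along the imaginary axis, for some x > 0. Then h ≡ 0 on the right half-plane. -/
/-!
Phragmén–Lindelöf in the two quadrants, applied to `exp (∓ i x z) h z`, spreads the decay on the
imaginary axis to `‖h z‖ ≤ K exp (-x |im z|)` on the whole half-plane. On the rays
`arg z = ±θ` (`θ < π / 2`) this bound says exactly that `‖exp (x tan θ z) h z‖ ≤ K`, and
Phragmén–Lindelöf in the sector `|arg z| ≤ θ`, of opening less than `π`, extends that bound to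
the sector. Letting `θ → π / 2` forces `h z = 0` whenever `re z > 0`, and continuity gives the
boundary.
-/

open Set Filter Complex
open scoped Topology Real

/-- Through `exp`, the sector `a ≤ arg z ≤ b` is a strip of width `b - a < π`, in which
exponential growth of `f` becomes growth of order `1 < π / (b - a)`. -/
theorem norm_le_of_arg_mem_Icc {f : ℂ → ℂ} {a b A B C : ℝ} (ha : -(π / 2) ≤ a) (hab : a < b)
    (hb : b ≤ π / 2) (hπ : b - a < π)
    (hd : DifferentiableOn ℂ f {z | 0 < z.re}) (hc : ContinuousOn f {z | 0 ≤ z.re})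
    (hgrowth : ∀ z : ℂ, 0 ≤ z.re → ‖f z‖ ≤ A * Real.exp (B * ‖z‖))
    (hle_a : ∀ z : ℂ, z ≠ 0 → arg z = a → ‖f z‖ ≤ C)
    (hle_b : ∀ z : ℂ, z ≠ 0 → arg z = b → ‖f z‖ ≤ C)
    {z : ℂ} (hz : z ≠ 0) (hza : a ≤ arg z) (hzb : arg z ≤ b) : ‖f z‖ ≤ C := by
  have hA : 0 ≤ A :=
    nonneg_of_mul_nonneg_left ((norm_nonneg _).trans (hgrowth 0 le_rfl)) (Real.exp_pos _)
  have hmaps : MapsTo exp (im ⁻¹' Icc a b) {w | 0 ≤ w.re} := fun w hw => by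
    rw [mem_ofPred_eq, exp_re]
    exact mul_nonneg (Real.exp_pos _).le
      (Real.cos_nonneg_of_mem_Icc ⟨ha.trans hw.1, hw.2.trans hb⟩)
  have hmaps' : MapsTo exp (im ⁻¹' Ioo a b) {w | 0 < w.re} := fun w hw => by
    rw [mem_ofPred_eq, exp_re]
    exact mul_pos (Real.exp_pos _)
      (Real.cos_pos_of_mem_Ioo ⟨ha.trans_lt hw.1, hw.2.trans_le hb⟩)
  have hG : DiffContOnCl ℂ (f ∘ exp) (im ⁻¹' Ioo a b) := by
    refine ⟨hd.comp differentiable_exp.differentiableOn hmaps', ?_⟩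
    rw [closure_preimage_im, closure_Ioo hab.ne]
    exact hc.comp continuous_exp.continuousOn hmaps
  have harg : ∀ w : ℂ, w.im ∈ Icc a b → arg (exp w) = w.im := fun w hw => by
    rw [arg_exp, toIocMod_eq_self]
    constructor <;> linarith [hw.1, hw.2, Real.pi_pos]
  have hlog : a ≤ (log z).im ∧ (log z).im ≤ b := by rw [log_im]; exact ⟨hza, hzb⟩
  rw [← exp_log hz, ← Function.comp_apply (f := f)]
  refine PhragmenLindelof.horizontal_strip hG ⟨1, (one_lt_div (sub_pos.2 hab)).2 hπ, max B 0, ?_⟩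
    (fun w hw => hle_a _ (exp_ne_zero w) ?_) (fun w hw => hle_b _ (exp_ne_zero w) ?_)
    hlog.1 hlog.2
  · refine Asymptotics.IsBigO.of_bound A (eventually_inf_principal.2 (Eventually.of_forall
      fun w hw => ?_))
    rw [Function.comp_apply, Real.norm_of_nonneg (Real.exp_pos _).le, one_mul]
    refine (hgrowth _ (hmaps (Ioo_subset_Icc_self hw))).trans ?_
    rw [norm_exp]
    gcongr
    exacts [le_max_left _ _, le_abs_self _]
  · rw [harg w (by simp [hw, hab.le]), hw]
  · rw [harg w (by simp [hw, hab.le]), hw]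

section HalfPlane

variable {h : ℂ → ℂ} {x M K : ℝ}

theorem norm_mul_exp_re_le_of_arg_mem_Icc (β : ℂ) {a b C : ℝ} (ha : -(π / 2) ≤ a) (hab : a < b)
    (hb : b ≤ π / 2) (hπ : b - a < π)
    (hd : DifferentiableOn ℂ h {z | 0 < z.re}) (hc : ContinuousOn h {z | 0 ≤ z.re})
    (hM : ∀ z : ℂ, 0 ≤ z.re → ‖h z‖ ≤ M)
    (hle_a : ∀ z : ℂ, z ≠ 0 → arg z = a → ‖h z‖ * Real.exp (β * z).re ≤ C)
    (hle_b : ∀ z : ℂ, z ≠ 0 → arg z = b → ‖h z‖ * Real.exp (β * z).re ≤ C)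
    {z : ℂ} (hz : z ≠ 0) (hza : a ≤ arg z) (hzb : arg z ≤ b) :
    ‖h z‖ * Real.exp (β * z).re ≤ C := by
  have hnorm : ∀ w, ‖cexp (β * w) * h w‖ = ‖h w‖ * Real.exp (β * w).re := fun w => by
    rw [norm_mul, norm_exp, mul_comm]
  have hβ : Differentiable ℂ fun w => cexp (β * w) := (differentiable_id.const_mul β).cexp
  simp only [← hnorm] at hle_a hle_b ⊢
  refine norm_le_of_arg_mem_Icc (f := fun w => cexp (β * w) * h w) (A := M) (B := ‖β‖)
    ha hab hb hπ (hβ.differentiableOn.mul hd) (hβ.continuous.continuousOn.mul hc)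
    (fun w hw => ?_) hle_a hle_b hz hza hzb
  rw [hnorm]
  exact mul_le_mul (hM w hw) (Real.exp_le_exp.2 ((re_le_norm _).trans (norm_mul_le _ _)))
    (Real.exp_pos _).le ((norm_nonneg _).trans (hM w hw))

theorem norm_mul_exp_abs_im_le {C : ℝ} (hd : DifferentiableOn ℂ h {z | 0 < z.re})
    (hc : ContinuousOn h {z | 0 ≤ z.re}) (hM : ∀ z : ℂ, 0 ≤ z.re → ‖h z‖ ≤ M)
    (hC : ∀ t : ℝ, ‖h (t * I)‖ ≤ C * Real.exp (-x * |t|)) {z : ℂ} (hz : 0 ≤ z.re) :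
    ‖h z‖ * Real.exp (x * |z.im|) ≤ max M C := by
  have hbdry : ∀ w : ℂ, 0 ≤ w.re → (w.re = 0 ∨ w.im = 0) →
      ‖h w‖ * Real.exp (x * |w.im|) ≤ max M C := by
    rintro w hw (hre | him)
    · obtain ⟨t, rfl⟩ : ∃ t : ℝ, w = t * I := ⟨w.im, ext (by simp [hre]) (by simp)⟩
      rw [mul_I_im, ofReal_re]
      calc ‖h (t * I)‖ * Real.exp (x * |t|)
          ≤ C * Real.exp (-x * |t|) * Real.exp (x * |t|) :=
            mul_le_mul_of_nonneg_right (hC t) (Real.exp_pos _).le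
        _ = C := by rw [mul_assoc, ← Real.exp_add]; simp
        _ ≤ max M C := le_max_right _ _
    · simpa [him] using (hM w hw).trans (le_max_left _ _)
  rcases eq_or_ne z 0 with rfl | hz0
  · exact hbdry 0 le_rfl (Or.inl rfl)
  have hπ := Real.pi_pos
  have harg := abs_le.1 (abs_arg_le_pi_div_two_iff.2 hz)
  rcases le_or_gt 0 z.im with him | him
  · have hre : ∀ w : ℂ, 0 ≤ w.im → (-(x * I) * w).re = x * |w.im| := fun w hw => by
      simp [abs_of_nonneg hw]
    rw [← hre z him]
    refine norm_mul_exp_re_le_of_arg_mem_Icc _ (a := 0) (b := π / 2) (by linarith) (by linarith)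
      le_rfl (by linarith) hd hc hM (fun w _ hw => ?_) (fun w _ hw => ?_) hz0
      (arg_nonneg_iff.2 him) harg.2
    · obtain ⟨hwre, hwim⟩ := arg_eq_zero_iff.1 hw
      rw [hre w hwim.ge]
      exact hbdry w hwre (Or.inr hwim)
    · obtain ⟨hwre, hwim⟩ := arg_eq_pi_div_two_iff.1 hw
      rw [hre w hwim.le]
      exact hbdry w hwre.ge (Or.inl hwre)
  · have hre : ∀ w : ℂ, w.im ≤ 0 → (x * I * w).re = x * |w.im| := fun w hw => by
      simp [abs_of_nonpos hw]
    rw [← hre z him.le]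
    refine norm_mul_exp_re_le_of_arg_mem_Icc _ (a := -(π / 2)) (b := 0) le_rfl (by linarith)
      (by linarith) (by linarith) hd hc hM (fun w _ hw => ?_) (fun w _ hw => ?_) hz0 harg.1
      (arg_neg_iff.2 him).le
    · obtain ⟨hwre, hwim⟩ := arg_eq_neg_pi_div_two_iff.1 hw
      rw [hre w hwim.le]
      exact hbdry w hwre.ge (Or.inl hwre)
    · obtain ⟨hwre, hwim⟩ := arg_eq_zero_iff.1 hw
      rw [hre w hwim.le]
      exact hbdry w hwre (Or.inr hwim)

theorem norm_mul_exp_tan_mul_re_le {θ : ℝ} (hd : DifferentiableOn ℂ h {z | 0 < z.re})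
    (hc : ContinuousOn h {z | 0 ≤ z.re}) (hM : ∀ z : ℂ, 0 ≤ z.re → ‖h z‖ ≤ M)
    (hK : ∀ z : ℂ, 0 ≤ z.re → ‖h z‖ * Real.exp (x * |z.im|) ≤ K) (hθ₀ : 0 < θ) (hθ : θ < π / 2)
    {z : ℂ} (hz : z ≠ 0) (harg : |arg z| ≤ θ) :
    ‖h z‖ * Real.exp (x * Real.tan θ * z.re) ≤ K := by
  have hre : ∀ w : ℂ, (↑(x * Real.tan θ) * w).re = x * Real.tan θ * w.re :=
    fun w => re_ofReal_mul _ _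
  have hray : ∀ w : ℂ, |arg w| = θ → ‖h w‖ * Real.exp (↑(x * Real.tan θ) * w).re ≤ K := by
    intro w hw
    have hcos : Real.cos θ ≠ 0 := (Real.cos_pos_of_mem_Ioo ⟨by linarith, hθ⟩).ne'
    have hcancel : x * Real.tan θ * w.re = x * |w.im| := by
      rw [← norm_mul_cos_arg, ← norm_mul_sin_arg, abs_mul, abs_norm,
        Real.abs_sin_eq_sin_abs_of_abs_le_pi (by linarith [Real.pi_pos]), ← Real.cos_abs, hw,
        Real.tan_eq_sin_div_cos]
      field_simp
    rw [hre, hcancel]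
    exact hK w (abs_arg_le_pi_div_two_iff.1 (by linarith))
  rw [← hre]
  exact norm_mul_exp_re_le_of_arg_mem_Icc _ (a := -θ) (b := θ) (by linarith) (by linarith) hθ.le
    (by linarith) hd hc hM (fun w _ hw => hray w (by rw [hw, abs_neg, abs_of_pos hθ₀]))
    (fun w _ hw => hray w (by rw [hw, abs_of_pos hθ₀])) hz (abs_le.1 harg).1 (abs_le.1 harg).2

theorem eq_zero_of_norm_mul_exp_abs_im_le (hx : 0 < x) (hd : DifferentiableOn ℂ h {z | 0 < z.re})
    (hc : ContinuousOn h {z | 0 ≤ z.re}) (hM : ∀ z : ℂ, 0 ≤ z.re → ‖h z‖ ≤ M)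
    (hK : ∀ z : ℂ, 0 ≤ z.re → ‖h z‖ * Real.exp (x * |z.im|) ≤ K) {z : ℂ} (hz : 0 < z.re) :
    h z = 0 := by
  have hz0 : z ≠ 0 := fun h0 => by simp [h0] at hz
  have hbound : ∀ᶠ θ in 𝓝[<] (π / 2), ‖h z‖ * Real.exp (x * Real.tan θ * z.re) ≤ K := by
    filter_upwards [Ioo_mem_nhdsLT (abs_arg_lt_pi_div_two_iff.2 (Or.inl hz))] with θ hθ
    exact norm_mul_exp_tan_mul_re_le hd hc hM hK ((abs_nonneg _).trans_lt hθ.1) hθ.2 hz0 hθ.1.le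
  by_contra hne
  have hgrow : Tendsto (fun θ => ‖h z‖ * Real.exp (x * Real.tan θ * z.re)) (𝓝[<] (π / 2)) atTop :=
    (Real.tendsto_exp_atTop.comp ((Real.tendsto_tan_pi_div_two.const_mul_atTop hx).atTop_mul_const
      hz)).const_mul_atTop (norm_pos_iff.2 hne)
  obtain ⟨θ, hθK, hθ⟩ := ((hgrow.eventually_gt_atTop K).and hbound).exists
  exact hθK.not_ge hθ

end HalfPlane

/-- Carlson-type theorem: if `h` is analytic in the open right half-plane, continuous and
bounded on the closed right half-plane, and `h(it) = O(e^{-x|t|})` on the imaginary axis for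
some `x > 0`, then `h ≡ 0` on the closed right half-plane. -/
theorem carlson_vanishing (h : ℂ → ℂ) (x : ℝ) (hx : 0 < x)
    (hd : DifferentiableOn ℂ h {z : ℂ | 0 < z.re})
    (hc : ContinuousOn h {z : ℂ | 0 ≤ z.re})
    (hb : ∃ M : ℝ, ∀ z : ℂ, 0 ≤ z.re → ‖h z‖ ≤ M)
    (hdec : ∃ C : ℝ, ∀ t : ℝ, ‖h ((t : ℂ) * Complex.I)‖ ≤ C * Real.exp (-x * |t|)) :
    ∀ z : ℂ, 0 ≤ z.re → h z = 0 := by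
  obtain ⟨M, hM⟩ := hb
  obtain ⟨C, hC⟩ := hdec
  have hopen : EqOn h 0 {z : ℂ | 0 < z.re} := fun z hz =>
    eq_zero_of_norm_mul_exp_abs_im_le hx hd hc hM
      (fun w hw => norm_mul_exp_abs_im_le hd hc hM hC hw) hz
  have hclosed := hopen.of_subset_closure hc continuousOn_const (fun z (hz : 0 < z.re) => hz.le)
    (closure_setOfPred_lt_re 0).ge
  exact fun z hz => hclosed hz
end
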